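/- arXiv:2604.09972 — 8 statements merged into one kernel-verified Lean document; each statement's English description precedes it below -/
import Mathlib

section
/- Let G be a finite connected bipartite simple graph with at least 2 vertices and let α be a positive real number. Then μ(G) = α if and only if there exists a function φ from V(G) to the positive real numbers such that for every vertex v of G, (α − d(v))·φ(v) = ∑_{w ∈ N(v)} φ(w), where d(v) is the degree of v and N(v) is the set of neighbours of v. -/
open Finset

/-- `μ` is the Laplacian spectral radius of `G`, i.e. the largest eigenvalue of the
Laplacian matrix `D(G) - A(G)`. -/
def IsLapSpecRad {V : Type} [Fintype V] (G : SimpleGraph V) (μ : ℝ) : Prop :=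
  letI := Classical.decEq V
  letI := Classical.decRel G.Adj
  μ ∈ spectrum ℝ (G.lapMatrix ℝ) ∧ ∀ x ∈ spectrum ℝ (G.lapMatrix ℝ), x ≤ μ

/-- The maximum degree of a finite simple graph. -/
noncomputable def maxDeg {V : Type} [Fintype V] (G : SimpleGraph V) : ℕ :=
  letI := Classical.decRel G.Adj
  G.maxDegree

/-! Conjugating by the diagonal `±1` matrix of a 2-colouring turns the Laplacian `D - A` of a
bipartite graph into the signless Laplacian `Q = D + A`, so the two have the same spectrum, and the
condition on `φ` says `Q φ = α φ`. Since `Q` has nonnegative entries, an eigenvalue with a positive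
eigenvector dominates every eigenvalue in absolute value: compare an eigenvector `η` with the least
multiple of `φ` lying above `|η|`. Conversely, if `α` is the largest eigenvalue then `α - Q` is
positive semidefinite, and for an eigenvector `η` of `α` the vector `|η|` has Rayleigh quotient at
least `α`, so it lies in the kernel of `α - Q`; a zero of `|η|` spreads along edges, so on a connected
graph `|η|` is positive. -/

open Matrix

namespace Matrix

variable {n : Type*} [Fintype n]

theorem mem_spectrum_iff_exists_mulVec_eq_smul [DecidableEq n] {K : Type*} [Field K]
    (A : Matrix n n K) (μ : K) : μ ∈ spectrum K A ↔ ∃ v ≠ 0, A *ᵥ v = μ • v := by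
  rw [← spectrum_toLin', ← Module.End.hasEigenvalue_iff_mem_spectrum,
    Module.End.hasEigenvalue_iff, Submodule.ne_bot_iff]
  simp only [Module.End.mem_eigenspace_iff, toLin'_apply]
  exact exists_congr fun v => and_comm

theorem dotProduct_mulVec_le_abs {A : Matrix n n ℝ} (hA : ∀ i j, 0 ≤ A i j) (η : n → ℝ) :
    η ⬝ᵥ (A *ᵥ η) ≤ |η| ⬝ᵥ (A *ᵥ |η|) := by
  simp only [dotProduct, mulVec, Finset.mul_sum, Pi.abs_apply]
  refine sum_le_sum fun i _ => sum_le_sum fun j _ => ?_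
  calc η i * (A i j * η j) ≤ |η i * (A i j * η j)| := le_abs_self _
    _ = |η i| * (A i j * |η j|) := by rw [abs_mul, abs_mul, abs_of_nonneg (hA i j)]

theorem abs_le_of_mulVec_eq_smul_of_pos {A : Matrix n n ℝ} (hA : ∀ i j, 0 ≤ A i j)
    {φ : n → ℝ} (hφ : ∀ i, 0 < φ i) {α : ℝ} (hAφ : A *ᵥ φ = α • φ)
    {η : n → ℝ} (hη : η ≠ 0) {x : ℝ} (hAη : A *ᵥ η = x • η) : |x| ≤ α := by
  obtain ⟨u, hu⟩ := Function.ne_iff.mp hη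
  obtain ⟨i, -, hi⟩ := Finset.exists_max_image univ (fun j => |η j| / φ j) ⟨u, mem_univ u⟩
  set c := |η i| / φ i
  have hle : ∀ j, |η j| ≤ c * φ j := fun j => (div_le_iff₀ (hφ j)).mp (hi j (mem_univ j))
  have hci : |η i| = c * φ i := (div_mul_cancel₀ _ (hφ i).ne').symm
  have hpos : 0 < |η i| := by
    have : 0 < c := (div_pos (abs_pos.mpr hu) (hφ u)).trans_le (hi u (mem_univ u))
    rw [hci]; exact mul_pos this (hφ i)
  refine le_of_mul_le_mul_right ?_ hpos
  calc |x| * |η i| = |∑ j, A i j * η j| := by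
        rw [← abs_mul, ← smul_eq_mul, ← Pi.smul_apply, ← hAη]; rfl
    _ ≤ ∑ j, A i j * (c * φ j) := by
        refine (abs_sum_le_sum_abs _ _).trans (sum_le_sum fun j _ => ?_)
        rw [abs_mul, abs_of_nonneg (hA i j)]
        exact mul_le_mul_of_nonneg_left (hle j) (hA i j)
    _ = c * (A *ᵥ φ) i := by
        simp only [mulVec, dotProduct, mul_sum]
        exact sum_congr rfl fun j _ => by ring
    _ = α * |η i| := by rw [hAφ, hci, Pi.smul_apply, smul_eq_mul]; ring

theorem isGreatest_spectrum_of_mulVec_eq_smul_of_pos [DecidableEq n] [Nonempty n]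
    {A : Matrix n n ℝ} (hA : ∀ i j, 0 ≤ A i j) {φ : n → ℝ} (hφ : ∀ i, 0 < φ i) {α : ℝ} (hAφ : A *ᵥ φ = α • φ) :
    IsGreatest (spectrum ℝ A) α := by
  have hφ0 : φ ≠ 0 := Function.ne_iff.2 ⟨Classical.arbitrary n, (hφ _).ne'⟩
  refine ⟨(mem_spectrum_iff_exists_mulVec_eq_smul A α).2 ⟨φ, hφ0, hAφ⟩, fun x hx => ?_⟩
  obtain ⟨η, hη, hAη⟩ := (mem_spectrum_iff_exists_mulVec_eq_smul A x).1 hx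
  exact (le_abs_self x).trans (abs_le_of_mulVec_eq_smul_of_pos hA hφ hAφ hη hAη)

theorem mulVec_abs_eq_smul_of_mem_upperBounds_spectrum [DecidableEq n] {A : Matrix n n ℝ}
    (hAh : A.IsHermitian) (hA : ∀ i j, 0 ≤ A i j) {α : ℝ}
    (hα : α ∈ upperBounds (spectrum ℝ A)) {η : n → ℝ} (hAη : A *ᵥ η = α • η) :
    A *ᵥ |η| = α • |η| := by
  set M := algebraMap ℝ (Matrix n n ℝ) α - A
  have hM : ∀ v, M *ᵥ v = α • v - A *ᵥ v := fun v => by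
    simp [M, sub_mulVec, Algebra.algebraMap_eq_smul_one, smul_mulVec]
  have hpsd : M.PosSemidef := by
    refine posSemidef_iff_isHermitian_and_spectrum_nonneg.2 ⟨?_, ?_⟩
    · exact (IsSelfAdjoint.algebraMap _ (IsSelfAdjoint.all α)).sub hAh
    · rw [← spectrum.singleton_sub_eq]
      rintro _ ⟨_, rfl, x, hx, rfl⟩
      exact sub_nonneg.2 (hα hx)
  have hquad : |η| ⬝ᵥ (M *ᵥ |η|) ≤ 0 := by
    have hnorm : |η| ⬝ᵥ |η| = η ⬝ᵥ η := by
      simp only [dotProduct, Pi.abs_apply, abs_mul_abs_self]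
    have hrayleigh := dotProduct_mulVec_le_abs hA η
    rw [hAη, dotProduct_smul, ← hnorm, ← dotProduct_smul] at hrayleigh
    rw [hM, dotProduct_sub]
    linarith
  have hker : M *ᵥ |η| = 0 := by
    refine (hpsd.dotProduct_mulVec_zero_iff |η|).1 ?_
    rw [star_trivial]
    exact le_antisymm hquad (by simpa using hpsd.dotProduct_mulVec_nonneg |η|)
  rw [hM, sub_eq_zero] at hker
  exact hker.symm

end Matrix

namespace SimpleGraph

namespace Coloring

variable {V R : Type*} {G : SimpleGraph V} [Ring R]

def sign (C : G.Coloring (Fin 2)) (v : V) : R := if C v = 0 then 1 else -1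

theorem sign_mul_sign_self (C : G.Coloring (Fin 2)) (v : V) : C.sign v * C.sign v = (1 : R) := by
  unfold sign; split_ifs <;> simp

theorem sign_mul_sign_of_adj (C : G.Coloring (Fin 2)) {v w : V} (h : G.Adj v w) :
    C.sign v * C.sign w = (-1 : R) := by
  have := C.valid h
  unfold sign
  split_ifs <;> simp_all [Fin.eq_one_of_ne_zero]

end Coloring

variable {V : Type*} (R : Type*) [Fintype V] [DecidableEq V] (G : SimpleGraph V)
  [DecidableRel G.Adj]

def signlessLapMatrix [AddMonoidWithOne R] : Matrix V V R := G.degMatrix R + G.adjMatrix R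

theorem isSymm_signlessLapMatrix [AddMonoidWithOne R] : (G.signlessLapMatrix R).IsSymm :=
  (G.isSymm_degMatrix R).add (G.isSymm_adjMatrix)

theorem signlessLapMatrix_nonneg [Semiring R] [PartialOrder R] [IsOrderedRing R] (v w : V) :
    0 ≤ G.signlessLapMatrix R v w := by
  rw [signlessLapMatrix, Matrix.add_apply, degMatrix, diagonal_apply, adjMatrix_apply]
  refine add_nonneg ?_ ?_ <;> split_ifs <;> simp

variable {R}

theorem signlessLapMatrix_mulVec_apply [NonAssocSemiring R] (f : V → R) (v : V) :
    (G.signlessLapMatrix R *ᵥ f) v = G.degree v * f v + ∑ w ∈ G.neighborFinset v, f w := by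
  rw [signlessLapMatrix, add_mulVec, Pi.add_apply, degMatrix_mulVec_apply,
    adjMatrix_mulVec_apply]

variable {G}

theorem diagonal_sign_mul_lapMatrix_mul_diagonal_sign [Ring R] (C : G.Coloring (Fin 2)) :
    diagonal C.sign * G.lapMatrix R * diagonal C.sign = G.signlessLapMatrix R := by
  ext v w
  rw [mul_diagonal, diagonal_mul, lapMatrix, signlessLapMatrix, Matrix.sub_apply,
    Matrix.add_apply, degMatrix, diagonal_apply, adjMatrix_apply]
  by_cases hvw : v = w
  · subst hvw
    simp only [if_pos, G.irrefl, if_false, sub_zero, add_zero]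
    rw [mul_assoc, Nat.cast_comm, ← mul_assoc, C.sign_mul_sign_self, one_mul]
  · by_cases hadj : G.Adj v w
    · simp [hvw, hadj, C.sign_mul_sign_of_adj hadj]
    · simp [hvw, hadj]

theorem spectrum_signlessLapMatrix [CommRing R] (C : G.Coloring (Fin 2)) :
    spectrum R (G.signlessLapMatrix R) = spectrum R (G.lapMatrix R) := by
  have hS : diagonal C.sign * diagonal C.sign = (1 : Matrix V V R) := by
    rw [diagonal_mul_diagonal, ← diagonal_one]
    exact congrArg diagonal (funext C.sign_mul_sign_self)
  rw [← diagonal_sign_mul_lapMatrix_mul_diagonal_sign C]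
  exact spectrum.units_conjugate (u := ⟨diagonal C.sign, diagonal C.sign, hS, hS⟩)

theorem pos_of_signlessLapMatrix_mulVec_eq_smul [Semiring R] [PartialOrder R] [IsOrderedRing R]
    (hconn : G.Connected) {α : R} {f : V → R} (hf : 0 ≤ f) (hf0 : f ≠ 0)
    (hQf : G.signlessLapMatrix R *ᵥ f = α • f) (v : V) : 0 < f v := by
  have hadj : ∀ {u w}, G.Adj u w → f u = 0 → f w = 0 := by
    intro u w huw hu
    have h := congrFun hQf u
    rw [signlessLapMatrix_mulVec_apply, Pi.smul_apply, hu, mul_zero, zero_add, smul_zero] at h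
    exact (sum_eq_zero_iff_of_nonneg fun x _ => hf x).1 h w ((G.mem_neighborFinset u w).2 huw)
  have hreach : ∀ {u w}, G.Reachable u w → f u = 0 → f w = 0 := by
    rintro u w ⟨p⟩
    induction p with
    | nil => exact id
    | cons h _ ih => exact ih ∘ hadj h
  exact (hf v).lt_of_ne fun hv => hf0 (funext fun w => hreach (hconn.preconnected v w) hv.symm)

end SimpleGraph

open SimpleGraph

theorem isLapSpecRad_iff {V : Type} [Fintype V] [DecidableEq V] (G : SimpleGraph V)
    [DecidableRel G.Adj] (μ : ℝ) :
    IsLapSpecRad G μ ↔ IsGreatest (spectrum ℝ (G.lapMatrix ℝ)) μ := by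
  simp only [IsLapSpecRad, IsGreatest, upperBounds, Set.mem_ofPred_eq]
  convert Iff.rfl

theorem stmt_3_general {V : Type} [Fintype V] (G : SimpleGraph V)
    [DecidableRel G.Adj] (hconn : G.Connected) (hbip : G.Colorable 2)
    (α : ℝ) :
    IsLapSpecRad G α ↔
      ∃ φ : V → ℝ, (∀ v, 0 < φ v) ∧
        ∀ v, (α - (G.degree v : ℝ)) * φ v = ∑ w ∈ G.neighborFinset v, φ w := by
  classical
  obtain ⟨C⟩ := hbip
  have : Nonempty V := hconn.nonempty
  have heigen (φ : V → ℝ) : (∀ v, (α - G.degree v) * φ v = ∑ w ∈ G.neighborFinset v, φ w) ↔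
      G.signlessLapMatrix ℝ *ᵥ φ = α • φ := by
    simp only [funext_iff, signlessLapMatrix_mulVec_apply, Pi.smul_apply, smul_eq_mul]
    exact forall_congr' fun v => by constructor <;> intro h <;> linarith
  simp only [heigen, isLapSpecRad_iff, ← spectrum_signlessLapMatrix C]
  constructor
  · rintro ⟨hmem, hmax⟩
    obtain ⟨η, hη, hQη⟩ := (mem_spectrum_iff_exists_mulVec_eq_smul _ α).1 hmem
    have habs := mulVec_abs_eq_smul_of_mem_upperBounds_spectrum
      (isHermitian_iff_isSymm.2 (G.isSymm_signlessLapMatrix ℝ)) (G.signlessLapMatrix_nonneg ℝ)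
      hmax hQη
    exact ⟨|η|, pos_of_signlessLapMatrix_mulVec_eq_smul hconn (abs_nonneg η)
      ((Pi.abs_eq_zero η).not.2 hη) habs, habs⟩
  · rintro ⟨φ, hφ, hQφ⟩
    exact isGreatest_spectrum_of_mulVec_eq_smul_of_pos (G.signlessLapMatrix_nonneg ℝ) hφ hQφ

theorem stmt_3 {V : Type} [Fintype V] [DecidableEq V] (G : SimpleGraph V)
    [DecidableRel G.Adj] (hconn : G.Connected) (hbip : G.Colorable 2)
    (hcard : 2 ≤ Fintype.card V) (α : ℝ) (hα : 0 < α) :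
    IsLapSpecRad G α ↔
      ∃ φ : V → ℝ, (∀ v, 0 < φ v) ∧
        ∀ v, (α - (G.degree v : ℝ)) * φ v = ∑ w ∈ G.neighborFinset v, φ w :=
  stmt_3_general G hconn hbip α
end

section
/- Let T be a finite tree with at least 2 vertices, let α = μ(T) be its Laplacian spectral radius, and suppose Δ(T) ≤ r for a positive integer r. If φ is a function from V(T) to the positive real numbers such that for every vertex v, (α − d(v))·φ(v) = ∑_{w ∈ N(v)} φ(w), then φ(u₁)/φ(u₂) ∈ ℒ_r(α) for every edge u₁u₂ of T (in both orders), and consequently (α−1)⁻¹ ∈ ℒ_r(α). -/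
open Finset

/-- The set `ℒ_r(α)`: the smallest set of reals containing `α - 1` and closed under the rule:
for `1 ≤ s ≤ r - 1` and `q₁, …, q_s ∈ ℒ_r(α)`, if `β := α − 1 − s − ∑ qᵢ⁻¹ > 0`
then `β ∈ ℒ_r(α)`. -/
inductive LSet (r : ℕ) (α : ℝ) : ℝ → Prop
  | base : LSet r α (α - 1)
  | step (s : ℕ) (hs1 : 1 ≤ s) (hsr : s ≤ r - 1) (q : Fin s → ℝ)
      (hmem : ∀ i, LSet r α (q i))
      (hpos : 0 < α - 1 - (s : ℝ) - ∑ i, (q i)⁻¹) :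
      LSet r α (α - 1 - (s : ℝ) - ∑ i, (q i)⁻¹)

/-!
Along an edge `vw` of the tree, the eigen-equation at `v` reads
`φ w / φ v = α - 1 - s - ∑ (φ v / φ x)⁻¹`, the sum running over the `s = d(v) - 1 ≤ r - 1` other
neighbours `x` of `v`. This is exactly the recursion defining `ℒ_r(α)`, with `α - 1` arising at
leaves, so the ratios along all edges lie in `ℒ_r(α)` by induction on the size of the branch
hanging off `v` away from `w`. At a leaf `v` with neighbour `w` the ratio `φ v / φ w` is
`(α - 1)⁻¹`.
-/

namespace LSet

variable {r : ℕ} {α : ℝ}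

theorem step_finset {ι : Type*} (s : Finset ι) (q : ι → ℝ) (hs1 : 1 ≤ #s) (hsr : #s ≤ r - 1)
    (hmem : ∀ i ∈ s, LSet r α (q i)) (hpos : 0 < α - 1 - #s - ∑ i ∈ s, (q i)⁻¹) :
    LSet r α (α - 1 - #s - ∑ i ∈ s, (q i)⁻¹) := by
  have hsum : ∑ i ∈ s, (q i)⁻¹ = ∑ j, (q (s.equivFin.symm j))⁻¹ :=
    (Finset.sum_coe_sort s _).symm.trans (Equiv.sum_comp s.equivFin.symm _).symm
  rw [hsum] at hpos ⊢
  exact step #s hs1 hsr _ (fun j => hmem _ (s.equivFin.symm j).2) hpos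

end LSet

namespace SimpleGraph

variable {V : Type} {G : SimpleGraph V}

theorem IsAcyclic.eq_of_adj_of_dist_add_one (hG : G.IsAcyclic) {u v x₁ x₂ : V}
    (h₁ : G.Adj x₁ v) (h₂ : G.Adj x₂ v)
    (hd₁ : G.dist u x₁ + 1 = G.dist u v) (hd₂ : G.dist u x₂ + 1 = G.dist u v) : x₁ = x₂ := by
  have huv : G.Reachable u v := Reachable.of_dist_ne_zero (by omega)
  obtain ⟨p₁, -, hp₁⟩ := (huv.trans h₁.symm.reachable).exists_path_of_dist
  obtain ⟨p₂, -, hp₂⟩ := (huv.trans h₂.symm.reachable).exists_path_of_dist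
  have hq₁ := (p₁.concat h₁).isPath_of_length_eq_dist (by rw [Walk.length_concat]; omega)
  have hq₂ := (p₂.concat h₂).isPath_of_length_eq_dist (by rw [Walk.length_concat]; omega)
  have := (hG.subsingleton_path u v).elim ⟨_, hq₁⟩ ⟨_, hq₂⟩
  exact (Walk.concat_inj (congrArg Subtype.val this)).1

/-- The vertices on `v`'s side of the edge `vw`. -/
def branch (G : SimpleGraph V) (v w : V) : Set V := {y | G.dist y v < G.dist y w}

theorem IsTree.branch_ssubset (hG : G.IsTree) {v w x : V} (hvw : G.Adj v w) (hxv : G.Adj x v)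
    (hxw : x ≠ w) : G.branch x v ⊂ G.branch v w := by
  refine Set.ssubset_iff_of_subset (fun y hy => ?_) |>.2 ⟨v, ?_, ?_⟩
  · simp only [branch, Set.mem_ofPred_eq] at hy ⊢
    have hyx : G.dist y x + 1 = G.dist y v := by
      rcases hG.dist_eq_dist_add_one_of_adj y hxv with h | h <;> omega
    rcases hG.dist_eq_dist_add_one_of_adj y hvw with h | h
    · exact absurd (hG.isAcyclic.eq_of_adj_of_dist_add_one hxv hvw.symm hyx h.symm) hxw
    · omega
  · simp [branch, dist_eq_one_iff_adj.mpr hvw]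
  · simp [branch]

end SimpleGraph

open SimpleGraph

section Eigenvector

variable {V : Type} [Fintype V] [DecidableEq V] {T : SimpleGraph V} [DecidableRel T.Adj]
  {r : ℕ} {α : ℝ} {φ : V → ℝ}

theorem div_eq_of_eigen {v w : V} (hv : φ v ≠ 0)
    (hφv : (α - (T.degree v : ℝ)) * φ v = ∑ x ∈ T.neighborFinset v, φ x) (hvw : T.Adj v w) :
    φ w / φ v = α - 1 - #((T.neighborFinset v).erase w)
      - ∑ x ∈ (T.neighborFinset v).erase w, (φ v / φ x)⁻¹ := by
  have hw : w ∈ T.neighborFinset v := (mem_neighborFinset T v w).2 hvw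
  have hdeg : (T.degree v : ℝ) = #((T.neighborFinset v).erase w) + 1 := by
    rw [card_erase_of_mem hw, ← card_neighborFinset_eq_degree,
      Nat.cast_sub (card_pos.2 ⟨w, hw⟩)]
    ring
  rw [← add_sum_erase _ _ hw, hdeg] at hφv
  simp only [inv_div, ← sum_div]
  field_simp
  linarith

theorem lset_div_of_forall_adj (hΔ : T.maxDegree ≤ r) (hφpos : ∀ x, 0 < φ x) {v w : V}
    (hφv : (α - (T.degree v : ℝ)) * φ v = ∑ x ∈ T.neighborFinset v, φ x) (hvw : T.Adj v w)
    (ih : ∀ x, T.Adj x v → x ≠ w → LSet r α (φ v / φ x)) : LSet r α (φ w / φ v) := by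
  have hratio := div_eq_of_eigen (hφpos v).ne' hφv hvw
  set s := (T.neighborFinset v).erase w
  rw [hratio]
  rcases s.eq_empty_or_nonempty with hs | hs
  · simpa [hs] using LSet.base
  · have hsr : #s ≤ r - 1 := by
      have := T.degree_le_maxDegree v
      rw [card_erase_of_mem ((mem_neighborFinset T v w).2 hvw), card_neighborFinset_eq_degree]
      omega
    refine LSet.step_finset s _ (card_pos.2 hs) hsr (fun x hx => ?_)
      (hratio ▸ div_pos (hφpos w) (hφpos v))
    obtain ⟨hxw, hx⟩ := mem_erase.1 hx
    exact ih x ((mem_neighborFinset T v x).1 hx).symm hxw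

theorem SimpleGraph.IsTree.lset_div_of_adj (hT : T.IsTree) (hΔ : T.maxDegree ≤ r)
    (hφpos : ∀ x, 0 < φ x)
    (hφ : ∀ v, (α - (T.degree v : ℝ)) * φ v = ∑ x ∈ T.neighborFinset v, φ x) {v w : V}
    (hvw : T.Adj v w) : LSet r α (φ w / φ v) :=
  lset_div_of_forall_adj hΔ hφpos (hφ v) hvw fun x hxv hxw =>
    have := Set.ncard_lt_ncard (hT.branch_ssubset hvw hxv hxw) (Set.toFinite _)
    hT.lset_div_of_adj hΔ hφpos hφ hxv
termination_by (T.branch v w).ncard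

end Eigenvector

theorem stmt_4_general {V : Type} [Fintype V] [DecidableEq V] (T : SimpleGraph V)
    [DecidableRel T.Adj] (htree : T.IsTree) (hcard : 2 ≤ Fintype.card V)
    (r : ℕ) (hΔ : T.maxDegree ≤ r)
    (α : ℝ)
    (φ : V → ℝ) (hφpos : ∀ v, 0 < φ v)
    (hφ : ∀ v, (α - (T.degree v : ℝ)) * φ v = ∑ w ∈ T.neighborFinset v, φ w) :
    (∀ u₁ u₂ : V, T.Adj u₁ u₂ → LSet r α (φ u₁ / φ u₂)) ∧ LSet r α (α - 1)⁻¹ := by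
  have hedge (u₁ u₂ : V) (h : T.Adj u₁ u₂) : LSet r α (φ u₁ / φ u₂) :=
    htree.lset_div_of_adj hΔ hφpos hφ h.symm
  refine ⟨hedge, ?_⟩
  have : Nontrivial V := Fintype.one_lt_card_iff_nontrivial.1 hcard
  obtain ⟨v, hv⟩ := htree.exists_vert_degree_one_of_nontrivial
  obtain ⟨w, hvw, -⟩ := degree_eq_one_iff_existsUnique_adj.1 hv
  have hleaf : (T.neighborFinset v).erase w = ∅ := by
    rw [← card_eq_zero, card_erase_of_mem ((mem_neighborFinset T v w).2 hvw),
      card_neighborFinset_eq_degree, hv]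
  have hratio : φ w / φ v = α - 1 := by
    simpa [hleaf] using div_eq_of_eigen (hφpos v).ne' (hφ v) hvw
  rw [← hratio, inv_div]
  exact hedge v w hvw

theorem stmt_4 {V : Type} [Fintype V] [DecidableEq V] (T : SimpleGraph V)
    [DecidableRel T.Adj] (htree : T.IsTree) (hcard : 2 ≤ Fintype.card V)
    (r : ℕ) (hr : 1 ≤ r) (hΔ : T.maxDegree ≤ r)
    (α : ℝ) (hα : IsLapSpecRad T α)
    (φ : V → ℝ) (hφpos : ∀ v, 0 < φ v)
    (hφ : ∀ v, (α - (T.degree v : ℝ)) * φ v = ∑ w ∈ T.neighborFinset v, φ w) :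
    (∀ u₁ u₂ : V, T.Adj u₁ u₂ → LSet r α (φ u₁ / φ u₂)) ∧ LSet r α (α - 1)⁻¹ :=
  stmt_4_general T htree hcard r hΔ α φ hφpos hφ
end

section
/- Let r be a positive integer and α a real number with α ≥ 2. If there exist a, b ∈ ℒ_r(α) with a·b = 1, then there exist an integer s with 1 ≤ s ≤ r and elements q₁, q₂, …, q_s ∈ ℒ_r(α) (repetitions allowed) such that ∑_{i=1}^s q_i⁻¹ = α − s. -/
open Finset

theorem stmt_6 (r : ℕ) (hr : 1 ≤ r) (α : ℝ) (hα : 2 ≤ α)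
    (a b : ℝ) (ha : LSet r α a) (hb : LSet r α b) (hab : a * b = 1) :
    ∃ (s : ℕ), 1 ≤ s ∧ s ≤ r ∧
      ∃ q : Fin s → ℝ, (∀ i, LSet r α (q i)) ∧ ∑ i, (q i)⁻¹ = α - (s : ℝ) := by
  have hane : a ≠ 0 := left_ne_zero_of_mul_eq_one hab
  have hainv : a⁻¹ = b := inv_eq_of_mul_eq_one_right hab
  cases hb with
  | base =>
    refine ⟨1, le_refl 1, hr, fun _ => a, fun _ => ha, ?_⟩
    simp [hainv]
  | step s hs1 hsr q hmem hpos =>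
    refine ⟨s + 1, by omega, by omega, Fin.cons a q, ?_, ?_⟩
    · intro i
      refine Fin.cases ha (fun j => hmem j) i
    · rw [Fin.sum_univ_succ]
      simp only [Fin.cons_zero, Fin.cons_succ, hainv]
      push_cast
      ring
end

section
/- Let r be a positive integer and α a real number with α ≥ 2. If 1 ∈ ℒ_r(α), then there exists a finite tree T with at least 2 vertices, maximum degree Δ(T) ≤ r and Laplacian spectral radius μ(T) = α. -/
open Finset

/-!
For every `q ∈ ℒ_r(α)` there is a rooted tree of maximum degree `≤ r` and root degree `< r`,
carrying a nowhere-zero vector `x` that alternates in sign along edges, satisfies `L x = α x` away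
from the root and `(L x)(root) = (α - 1 - q) x(root)`. The base value `α - 1` is a single vertex;
the recursive step hangs the trees of `q₁, …, q_s` below a new root, each rescaled so that its old
root's equation closes up. For `q = 1`, two copies joined at their roots carry an alternating
`α`-eigenvector `x` of the whole Laplacian. Then `|x|` is a positive `α`-eigenvector of the
signless Laplacian `D + A`, and comparing any Laplacian eigenvector with it (Collatz–Wielandt)
shows that no Laplacian eigenvalue exceeds `α`.
-/

open SimpleGraph Matrix Finset

namespace Matrix

variable {K n : Type*} [Field K] [Fintype n] [DecidableEq n] {M : Matrix n n K} {μ : K}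

lemma mem_spectrum_of_mulVec_eq_smul {x : n → K} (hx : x ≠ 0) (h : M *ᵥ x = μ • x) :
    μ ∈ spectrum K M := by
  rw [← spectrum_toLin', ← Module.End.hasEigenvalue_iff_mem_spectrum]
  exact Module.End.hasEigenvalue_of_hasEigenvector ⟨Module.End.mem_eigenspace_iff.mpr h, hx⟩

lemma exists_mulVec_eq_smul_of_mem_spectrum (hμ : μ ∈ spectrum K M) :
    ∃ z ≠ 0, M *ᵥ z = μ • z := by
  rw [← spectrum_toLin', ← Module.End.hasEigenvalue_iff_mem_spectrum] at hμ
  obtain ⟨z, hz⟩ := hμ.exists_hasEigenvector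
  exact ⟨z, hz.2, Module.End.mem_eigenspace_iff.mp hz.1⟩

end Matrix

namespace SimpleGraph

instance {V W : Type*} {G : SimpleGraph V} {H : SimpleGraph W} [DecidableRel G.Adj]
    [DecidableRel H.Adj] : DecidableRel (G.sum H).Adj
  | .inl v, .inl w => inferInstanceAs (Decidable (G.Adj v w))
  | .inr v, .inr w => inferInstanceAs (Decidable (H.Adj v w))
  | .inl _, .inr _ => .isFalse (not_adj_sum_inl_inr _ _)
  | .inr _, .inl _ => .isFalse fun h => not_adj_sum_inl_inr _ _ h.symm

section SumSupEdge

variable {V W : Type*} {G : SimpleGraph V} {H : SimpleGraph W} {a : V} {b : W}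

@[simp] lemma sum_sup_edge_adj_inl_inl {v v' : V} :
    (G.sum H ⊔ edge (Sum.inl a) (Sum.inr b)).Adj (Sum.inl v) (Sum.inl v') ↔ G.Adj v v' := by
  simp [edge_adj]

@[simp] lemma sum_sup_edge_adj_inl_inr {v : V} {w : W} :
    (G.sum H ⊔ edge (Sum.inl a) (Sum.inr b)).Adj (Sum.inl v) (Sum.inr w) ↔ v = a ∧ w = b := by
  simp [edge_adj]

@[simp] lemma sum_sup_edge_adj_inr_inl {v : V} {w : W} :
    (G.sum H ⊔ edge (Sum.inl a) (Sum.inr b)).Adj (Sum.inr w) (Sum.inl v) ↔ v = a ∧ w = b := by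
  rw [adj_comm, sum_sup_edge_adj_inl_inr]

@[simp] lemma sum_sup_edge_adj_inr_inr {w w' : W} :
    (G.sum H ⊔ edge (Sum.inl a) (Sum.inr b)).Adj (Sum.inr w) (Sum.inr w') ↔ H.Adj w w' := by
  simp [edge_adj]

lemma IsTree.sum_sup_edge [Finite V] [Finite W] (hG : G.IsTree) (hH : H.IsTree) :
    (G.sum H ⊔ edge (Sum.inl a) (Sum.inr b)).IsTree := by
  rw [isTree_iff_connected_and_card] at *
  refine ⟨hG.1.sum_sup_edge hH.1, ?_⟩
  have hnew : s(Sum.inl a, Sum.inr b) ∉ (G.sum H).edgeSet := by simp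
  rw [edgeSet_sup, edgeSet_edge_of_ne Sum.inl_ne_inr, Set.union_singleton,
    Nat.card_coe_set_eq, Set.ncard_insert_of_notMem hnew, ← Nat.card_coe_set_eq,
    Nat.card_congr edgeSetSumEquiv, Nat.card_sum, Nat.card_sum, ← hG.2, ← hH.2]
  ring

variable [Fintype V] [Fintype W] [DecidableRel G.Adj] [DecidableRel H.Adj]

lemma sum_neighborFinset_sum_sup_edge_inl {M : Type*} [AddCommMonoid M] [DecidableEq V]
    [DecidableEq W] (f : V ⊕ W → M) (v : V) :
    ∑ u ∈ (G.sum H ⊔ edge (Sum.inl a) (Sum.inr b)).neighborFinset (Sum.inl v), f u =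
      ∑ u ∈ G.neighborFinset v, f (Sum.inl u) + if v = a then f (Sum.inr b) else 0 := by
  simp only [neighborFinset_eq_filter, sum_filter, Fintype.sum_sum_type, sum_sup_edge_adj_inl_inl,
    sum_sup_edge_adj_inl_inr, ite_and]
  simp

lemma sum_neighborFinset_sum_sup_edge_inr {M : Type*} [AddCommMonoid M] [DecidableEq V]
    [DecidableEq W] (f : V ⊕ W → M) (w : W) :
    ∑ u ∈ (G.sum H ⊔ edge (Sum.inl a) (Sum.inr b)).neighborFinset (Sum.inr w), f u =
      ∑ u ∈ H.neighborFinset w, f (Sum.inr u) + if w = b then f (Sum.inl a) else 0 := by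
  simp only [neighborFinset_eq_filter, sum_filter, Fintype.sum_sum_type, sum_sup_edge_adj_inr_inr,
    sum_sup_edge_adj_inr_inl, ite_and]
  simp [add_comm]

lemma degree_sum_sup_edge_inl [DecidableEq V] [DecidableEq W] (v : V) :
    (G.sum H ⊔ edge (Sum.inl a) (Sum.inr b)).degree (Sum.inl v) =
      G.degree v + if v = a then 1 else 0 := by
  simp only [← card_neighborFinset_eq_degree, card_eq_sum_ones,
    sum_neighborFinset_sum_sup_edge_inl]

lemma degree_sum_sup_edge_inr [DecidableEq V] [DecidableEq W] (w : W) :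
    (G.sum H ⊔ edge (Sum.inl a) (Sum.inr b)).degree (Sum.inr w) =
      H.degree w + if w = b then 1 else 0 := by
  simp only [← card_neighborFinset_eq_degree, card_eq_sum_ones,
    sum_neighborFinset_sum_sup_edge_inr]

lemma lapMatrix_sum_sup_edge_mulVec_inl {R : Type*} [CommRing R] [DecidableEq V]
    [DecidableEq W] (x : V ⊕ W → R) (v : V) :
    ((G.sum H ⊔ edge (Sum.inl a) (Sum.inr b)).lapMatrix R *ᵥ x) (Sum.inl v) =
      (G.lapMatrix R *ᵥ (x ∘ Sum.inl)) v + if v = a then x (Sum.inl a) - x (Sum.inr b) else 0 := by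
  rw [lapMatrix_mulVec_apply, lapMatrix_mulVec_apply, degree_sum_sup_edge_inl,
    sum_neighborFinset_sum_sup_edge_inl]
  split_ifs with hv
  · subst hv; push_cast [Function.comp_apply]; ring
  · simp

lemma lapMatrix_sum_sup_edge_mulVec_inr {R : Type*} [CommRing R] [DecidableEq V]
    [DecidableEq W] (x : V ⊕ W → R) (w : W) :
    ((G.sum H ⊔ edge (Sum.inl a) (Sum.inr b)).lapMatrix R *ᵥ x) (Sum.inr w) =
      (H.lapMatrix R *ᵥ (x ∘ Sum.inr)) w + if w = b then x (Sum.inr b) - x (Sum.inl a) else 0 := by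
  rw [lapMatrix_mulVec_apply, lapMatrix_mulVec_apply, degree_sum_sup_edge_inr,
    sum_neighborFinset_sum_sup_edge_inr]
  split_ifs with hw
  · subst hw; push_cast [Function.comp_apply]; ring
  · simp

end SumSupEdge

section Spectrum

variable {V : Type*} [Fintype V] [DecidableEq V] {G : SimpleGraph V} [DecidableRel G.Adj]

-- Collatz–Wielandt: at a vertex maximising `|z v| / y v`, use `|L z| ≤ (D + A) |z|` entrywise.
lemma le_of_mem_spectrum_lapMatrix {y : V → ℝ} (hy : ∀ v, 0 < y v) {α : ℝ}
    (h : ∀ v, G.degree v * y v + ∑ u ∈ G.neighborFinset v, y u ≤ α * y v) {μ : ℝ}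
    (hμ : μ ∈ spectrum ℝ (G.lapMatrix ℝ)) : μ ≤ α := by
  obtain ⟨z, hz, hμz⟩ := exists_mulVec_eq_smul_of_mem_spectrum hμ
  obtain ⟨v, -, hv⟩ := exists_max_image univ (fun v => |z v| / y v)
    (univ_nonempty_iff.mpr (Function.ne_iff.mp hz).nonempty)
  set c := |z v| / y v
  have hzc : ∀ u, |z u| ≤ c * y u := fun u =>
    (div_le_iff₀ (hy u)).mp (hv u (mem_univ u))
  have hc : 0 < c := by
    obtain ⟨u, hu⟩ := Function.ne_iff.mp hz
    exact (div_pos (abs_pos.mpr hu) (hy u)).trans_le (hv u (mem_univ u))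
  have hzv : |z v| = c * y v := (div_mul_cancel₀ _ (hy v).ne').symm
  have key : |μ| * |z v| ≤ α * |z v| := calc
    |μ| * |z v| = |G.degree v * z v - ∑ u ∈ G.neighborFinset v, z u| := by
      rw [← abs_mul, ← smul_eq_mul, ← Pi.smul_apply, ← hμz, lapMatrix_mulVec_apply]
    _ ≤ G.degree v * |z v| + ∑ u ∈ G.neighborFinset v, |z u| := by
      refine (abs_sub _ _).trans (add_le_add ?_ (abs_sum_le_sum_abs _ _))
      rw [abs_mul, Nat.abs_cast]
    _ ≤ G.degree v * (c * y v) + ∑ u ∈ G.neighborFinset v, c * y u := by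
      rw [hzv]; gcongr with u; exact hzc u
    _ = c * (G.degree v * y v + ∑ u ∈ G.neighborFinset v, y u) := by rw [mul_add, mul_sum]; ring
    _ ≤ c * (α * y v) := by gcongr; exact h v
    _ = α * |z v| := by rw [hzv]; ring
  have hzpos : 0 < |z v| := by rw [hzv]; exact mul_pos hc (hy v)
  exact (le_abs_self μ).trans (le_of_mul_le_mul_right key hzpos)

lemma degree_mul_abs_add_sum_abs_of_alternating {x : V → ℝ} (hx : ∀ v, x v ≠ 0)
    (hadj : ∀ ⦃u v⦄, G.Adj u v → x u * x v < 0) {α : ℝ} (h : G.lapMatrix ℝ *ᵥ x = α • x) (v : V) :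
    G.degree v * |x v| + ∑ u ∈ G.neighborFinset v, |x u| = α * |x v| := by
  have hneg : ∀ u ∈ G.neighborFinset v, |x v| * |x u| = -(x v * x u) := fun u hu =>
    by rw [← abs_mul, abs_of_neg (hadj ((G.mem_neighborFinset v u).mp hu))]
  have hv := congrFun h v
  rw [lapMatrix_mulVec_apply, Pi.smul_apply, smul_eq_mul] at hv
  refine mul_left_cancel₀ (abs_pos.mpr (hx v)).ne' ?_
  calc |x v| * (G.degree v * |x v| + ∑ u ∈ G.neighborFinset v, |x u|)
      = G.degree v * |x v| ^ 2 + ∑ u ∈ G.neighborFinset v, |x v| * |x u| := by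
        rw [mul_add, mul_sum]; ring
    _ = x v * (G.degree v * x v - ∑ u ∈ G.neighborFinset v, x u) := by
        rw [sum_congr rfl hneg, sq_abs, sum_neg_distrib, mul_sub, mul_sum]; ring
    _ = |x v| * (α * |x v|) := by rw [hv]; linear_combination (-α) * sq_abs (x v)

end Spectrum

lemma Iso.lapMatrix_eq {V W : Type*} [Fintype V] [Fintype W] [DecidableEq V] [DecidableEq W]
    {G : SimpleGraph V} {G' : SimpleGraph W} [DecidableRel G.Adj] [DecidableRel G'.Adj]
    (R : Type*) [AddGroupWithOne R] (e : G ≃g G') :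
    G'.lapMatrix R = reindex e e (G.lapMatrix R) := by
  ext i j
  obtain ⟨i, rfl⟩ := e.surjective i
  obtain ⟨j, rfl⟩ := e.surjective j
  simp only [lapMatrix, degMatrix, Matrix.sub_apply, diagonal_apply, EmbeddingLike.apply_eq_iff_eq,
    Iso.degree_eq, adjMatrix_apply, reindex_apply, submatrix_apply,
    EquivLike.coe_symm_apply_apply, sub_right_inj]
  exact if_congr e.map_adj_iff rfl rfl

lemma Iso.spectrum_lapMatrix_eq {V W : Type*} [Fintype V] [Fintype W] [DecidableEq V]
    [DecidableEq W] {G : SimpleGraph V} {G' : SimpleGraph W} [DecidableRel G.Adj]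
    [DecidableRel G'.Adj] (e : G ≃g G') : spectrum ℝ (G'.lapMatrix ℝ) = spectrum ℝ (G.lapMatrix ℝ) := by
  rw [e.lapMatrix_eq ℝ, ← coe_reindexAlgEquiv ℝ ℝ, AlgEquiv.spectrum_eq]

lemma Iso.isLapSpecRad {V W : Type} [Fintype V] [Fintype W] {G : SimpleGraph V}
    {G' : SimpleGraph W} (e : G ≃g G') {μ : ℝ} (h : IsLapSpecRad G μ) : IsLapSpecRad G' μ := by
  classical
  unfold IsLapSpecRad at *
  rwa [e.spectrum_lapMatrix_eq]

lemma Iso.maxDeg_eq {V W : Type} [Fintype V] [Fintype W] {G : SimpleGraph V}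
    {G' : SimpleGraph W} (e : G ≃g G') : maxDeg G' = maxDeg G := by
  classical
  unfold maxDeg
  exact e.maxDegree_eq.symm

end SimpleGraph

theorem isLapSpecRad_of_alternating {V : Type} [Fintype V] [Nonempty V] [DecidableEq V]
    {G : SimpleGraph V} [DecidableRel G.Adj] {x : V → ℝ} (hx : ∀ v, x v ≠ 0)
    (hadj : ∀ ⦃u v⦄, G.Adj u v → x u * x v < 0) {α : ℝ} (h : G.lapMatrix ℝ *ᵥ x = α • x) :
    IsLapSpecRad G α := by
  have hspec : α ∈ spectrum ℝ (G.lapMatrix ℝ) ∧ ∀ μ ∈ spectrum ℝ (G.lapMatrix ℝ), μ ≤ α :=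
    ⟨mem_spectrum_of_mulVec_eq_smul (Function.ne_iff.mpr ⟨Classical.arbitrary V, hx _⟩) h,
      fun μ => le_of_mem_spectrum_lapMatrix (fun v => abs_pos.mpr (hx v))
        fun v => (degree_mul_abs_add_sum_abs_of_alternating hx hadj h v).le⟩
  unfold IsLapSpecRad
  convert hspec

lemma LSet.pos {r : ℕ} {α q : ℝ} (hα : 1 < α) (h : LSet r α q) : 0 < q := by
  induction h with
  | base => linarith
  | step _ _ _ _ _ hpos => exact hpos

lemma maxDeg_le_of_forall_degree_le {V : Type} [Fintype V] {G : SimpleGraph V}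
    [DecidableRel G.Adj] {k : ℕ} (h : ∀ v, G.degree v ≤ k) : maxDeg G ≤ k := by
  unfold maxDeg
  convert G.maxDegree_le_of_forall_degree_le k h

/-- Joining `root` to a new neighbour carrying `-q * x root` turns `lapMatrix_mulVec_root` into
`(L x) root = α * x root`. -/
structure RootedEigentree (r : ℕ) (α : ℝ) where
  V : Type
  [fintype : Fintype V]
  [decEq : DecidableEq V]
  G : SimpleGraph V
  [decAdj : DecidableRel G.Adj]
  root : V
  x : V → ℝ
  q : ℝ
  isTree : G.IsTree
  degree_le : ∀ v ≠ root, G.degree v ≤ r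
  x_ne_zero : ∀ v, x v ≠ 0
  mul_neg_of_adj : ∀ ⦃u v⦄, G.Adj u v → x u * x v < 0
  lapMatrix_mulVec_of_ne_root : ∀ v ≠ root, (G.lapMatrix ℝ *ᵥ x) v = α * x v
  lapMatrix_mulVec_root : (G.lapMatrix ℝ *ᵥ x) root = (α - 1 - q) * x root

namespace RootedEigentree

attribute [instance] fintype decEq decAdj

variable {r : ℕ} {α : ℝ}

def single (r : ℕ) (α : ℝ) : RootedEigentree r α where
  V := Unit
  G := ⊥
  root := ()
  x := 1
  q := α - 1
  isTree := .of_subsingleton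
  degree_le v hv := absurd rfl hv
  x_ne_zero _ := one_ne_zero
  mul_neg_of_adj _ _ h := h.elim
  lapMatrix_mulVec_of_ne_root v hv := absurd rfl hv
  lapMatrix_mulVec_root := by simp [lapMatrix_mulVec_apply]

lemma degree_single_root : (single r α).G.degree (single r α).root = 0 :=
  bot_degree ()

variable (A B : RootedEigentree r α)

/-- Chosen so that `A.x A.root = -B.q * (attachScale * B.x B.root)`: `A.root` becomes the new
neighbour that `B.root` asks for. -/
noncomputable def attachScale : ℝ := -(A.x A.root / (B.q * B.x B.root))

lemma attachScale_mul {A B : RootedEigentree r α} (hB : B.q ≠ 0) :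
    A.attachScale B * B.x B.root = -(A.x A.root / B.q) := by
  simp only [attachScale]
  field_simp [B.x_ne_zero B.root]

lemma attachScale_ne_zero {A B : RootedEigentree r α} (hB : B.q ≠ 0) : A.attachScale B ≠ 0 :=
  neg_ne_zero.mpr (div_ne_zero (A.x_ne_zero _) (mul_ne_zero hB (B.x_ne_zero _)))

noncomputable def attach (hB : 0 < B.q) (hBr : B.G.degree B.root < r) : RootedEigentree r α where
  V := A.V ⊕ B.V
  G := A.G.sum B.G ⊔ edge (Sum.inl A.root) (Sum.inr B.root)
  root := Sum.inl A.root
  x := Sum.elim A.x (A.attachScale B • B.x)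
  q := A.q - 1 - B.q⁻¹
  isTree := A.isTree.sum_sup_edge B.isTree
  degree_le := by
    rintro (v | w) hv
    · rw [degree_sum_sup_edge_inl, if_neg (by simpa using hv), add_zero]
      exact A.degree_le v (by simpa using hv)
    · rw [degree_sum_sup_edge_inr]
      split_ifs with hw
      · subst hw; omega
      · exact B.degree_le w hw
  x_ne_zero := by
    rintro (v | w)
    · exact A.x_ne_zero v
    · exact mul_ne_zero (attachScale_ne_zero hB.ne') (B.x_ne_zero w)
  mul_neg_of_adj := by
    have hroots : A.x A.root * (A.attachScale B * B.x B.root) < 0 := by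
      rw [attachScale_mul hB.ne', mul_neg, neg_lt_zero, ← mul_div_assoc]
      exact div_pos (mul_self_pos.mpr (A.x_ne_zero _)) hB
    rintro (v | w) (v' | w') h
    · exact A.mul_neg_of_adj (sum_sup_edge_adj_inl_inl.mp h)
    · obtain ⟨rfl, rfl⟩ := sum_sup_edge_adj_inl_inr.mp h
      simpa using hroots
    · obtain ⟨rfl, rfl⟩ := sum_sup_edge_adj_inr_inl.mp h
      simpa [mul_comm] using hroots
    · have := B.mul_neg_of_adj (sum_sup_edge_adj_inr_inr.mp h)
      simp only [Sum.elim_inr, Pi.smul_apply, smul_eq_mul]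
      nlinarith [mul_self_pos.mpr (attachScale_ne_zero (A := A) hB.ne')]
  lapMatrix_mulVec_of_ne_root := by
    rintro (v | w) hv
    · rw [lapMatrix_sum_sup_edge_mulVec_inl, if_neg (by simpa using hv), Sum.elim_comp_inl,
        A.lapMatrix_mulVec_of_ne_root v (by simpa using hv)]
      simp
    · rw [lapMatrix_sum_sup_edge_mulVec_inr, Sum.elim_comp_inr, mulVec_smul]
      split_ifs with hw
      · subst hw
        have hscale : B.q * (A.attachScale B * B.x B.root) = -A.x A.root := by
          rw [attachScale_mul hB.ne', mul_neg, mul_div_cancel₀ _ hB.ne']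
        simp only [Pi.smul_apply, smul_eq_mul, Sum.elim_inr, Sum.elim_inl,
          B.lapMatrix_mulVec_root]
        linear_combination -hscale
      · simp [B.lapMatrix_mulVec_of_ne_root w hw]
        ring
  lapMatrix_mulVec_root := by
    have := attachScale_mul (A := A) hB.ne'
    rw [lapMatrix_sum_sup_edge_mulVec_inl, if_pos rfl, Sum.elim_comp_inl, A.lapMatrix_mulVec_root]
    simp only [Sum.elim_inl, Sum.elim_inr, Pi.smul_apply, smul_eq_mul]
    linear_combination -this

lemma q_attach {A B : RootedEigentree r α} (hB : 0 < B.q) (hBr : B.G.degree B.root < r) :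
    (A.attach B hB hBr).q = A.q - 1 - B.q⁻¹ :=
  rfl

lemma degree_attach_root {A B : RootedEigentree r α} (hB : 0 < B.q)
    (hBr : B.G.degree B.root < r) :
    (A.attach B hB hBr).G.degree (A.attach B hB hBr).root = A.G.degree A.root + 1 :=
  (degree_sum_sup_edge_inl A.root).trans (by rw [if_pos rfl])

lemma exists_q_eq_sub_sum_inv (s : ℕ) (q : Fin s → ℝ) (hq : ∀ i, 0 < q i)
    (hT : ∀ i, ∃ T : RootedEigentree r α, T.q = q i ∧ T.G.degree T.root < r) :
    ∃ T : RootedEigentree r α, T.q = α - 1 - s - ∑ i, (q i)⁻¹ ∧ T.G.degree T.root = s := by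
  induction s with
  | zero => exact ⟨single r α, by simp [single], degree_single_root⟩
  | succ s ih =>
    obtain ⟨A, hAq, hAdeg⟩ := ih (fun i => q i.castSucc) (fun i => hq _) (fun i => hT _)
    obtain ⟨B, hBq, hBdeg⟩ := hT (Fin.last s)
    refine ⟨A.attach B (hBq ▸ hq _) hBdeg, ?_, by rw [degree_attach_root, hAdeg]⟩
    rw [q_attach, hAq, hBq, Fin.sum_univ_castSucc]
    push_cast
    ring

lemma exists_q_eq_of_lSet (hr : 1 ≤ r) (hα : 1 < α) {q : ℝ} (h : LSet r α q) :
    ∃ T : RootedEigentree r α, T.q = q ∧ T.G.degree T.root < r := by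
  induction h with
  | base => exact ⟨single r α, rfl, by rw [degree_single_root]; omega⟩
  | step s _ hsr q hmem _ ih =>
    obtain ⟨T, hTq, hTdeg⟩ := exists_q_eq_sub_sum_inv s q (fun i => (hmem i).pos hα) ih
    exact ⟨T, hTq, by omega⟩

lemma maxDeg_le (T : RootedEigentree r α) (h : T.G.degree T.root ≤ r) : maxDeg T.G ≤ r := by
  refine maxDeg_le_of_forall_degree_le fun v => ?_
  by_cases hv : v = T.root
  · exact hv ▸ h
  · exact T.degree_le v hv

lemma isLapSpecRad (T : RootedEigentree r α) (hq : T.q = -1) : IsLapSpecRad T.G α := by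
  have : Nonempty T.V := ⟨T.root⟩
  refine isLapSpecRad_of_alternating T.x_ne_zero T.mul_neg_of_adj (funext fun v => ?_)
  by_cases hv : v = T.root
  · subst hv
    rw [T.lapMatrix_mulVec_root, hq, Pi.smul_apply, smul_eq_mul]
    ring
  · exact T.lapMatrix_mulVec_of_ne_root v hv

end RootedEigentree

theorem stmt_8 (r : ℕ) (hr : 1 ≤ r) (α : ℝ) (hα : 2 ≤ α) (h1 : LSet r α 1) :
    ∃ (n : ℕ) (G : SimpleGraph (Fin n)),
      2 ≤ n ∧ G.IsTree ∧ maxDeg G ≤ r ∧ IsLapSpecRad G α := by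
  obtain ⟨T, hTq, hTr⟩ := RootedEigentree.exists_q_eq_of_lSet hr (by linarith) h1
  let K := T.attach T (hTq ▸ one_pos) hTr
  have hKq : K.q = -1 := by
    rw [RootedEigentree.q_attach, hTq]
    norm_num
  let e := K.G.overFinIso rfl
  refine ⟨_, K.G.overFin rfl, ?_, e.isTree_iff.mp K.isTree,
    e.maxDeg_eq ▸ K.maxDeg_le ?_, e.isLapSpecRad (K.isLapSpecRad hKq)⟩
  · have : 0 < Fintype.card T.V := Fintype.card_pos_iff.mpr ⟨T.root⟩
    simp only [K, RootedEigentree.attach, Fintype.card_sum]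
    omega
  · rw [RootedEigentree.degree_attach_root]
    omega
end

section
/- The set ℒ_2(4) equals { (2i+1)/(2i−1) : i a positive integer }. -/
open Finset

/-! For `r = 2` the rule of `ℒ_r(α)` takes a single element and is the map `q ↦ α - 2 - q⁻¹`,
so `ℒ_2(α)` is the forward orbit of `α - 1` under it, as long as the values stay positive.
For `α = 4` the map sends `(2i+1)/(2i-1)` to `(2i+3)/(2i+1)`, the orbit starts at
`3 = (2·1+1)/(2·1-1)`, and every value is positive, so the orbit is the whole sequence. -/

theorem LSet.two_step {α q : ℝ} (hq : LSet 2 α q) (hpos : 0 < α - 2 - q⁻¹) :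
    LSet 2 α (α - 2 - q⁻¹) := by
  have e : α - 1 - ((1 : ℕ) : ℝ) - ∑ _ : Fin 1, q⁻¹ = α - 2 - q⁻¹ := by simp; ring
  rw [← e] at hpos ⊢
  exact LSet.step 1 le_rfl le_rfl (fun _ => q) (fun _ => hq) hpos

theorem LSet.two_induction {α : ℝ} {P : ℝ → Prop} (base : P (α - 1))
    (step : ∀ q, LSet 2 α q → P q → P (α - 2 - q⁻¹)) {x : ℝ} (hx : LSet 2 α x) : P x := by
  induction hx with
  | base => exact base
  | step s hs1 hsr q hmem _ ih =>
    obtain rfl : s = 1 := by omega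
    have e : α - 1 - ((1 : ℕ) : ℝ) - ∑ i, (q i)⁻¹ = α - 2 - (q 0)⁻¹ := by simp; ring
    exact e ▸ step (q 0) (hmem 0) (ih 0)

noncomputable def oddRatio (i : ℕ) : ℝ := (2 * (i : ℝ) + 1) / (2 * (i : ℝ) - 1)

theorem oddRatio_one : oddRatio 1 = 3 := by norm_num [oddRatio]

theorem oddRatio_succ_pos (i : ℕ) : 0 < oddRatio (i + 1) := by
  unfold oddRatio; push_cast; apply div_pos <;> linarith [(i.cast_nonneg : (0 : ℝ) ≤ i)]

theorem two_sub_inv_oddRatio {i : ℕ} (hi : 0 < i) : 2 - (oddRatio i)⁻¹ = oddRatio (i + 1) := by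
  have hi : (1 : ℝ) ≤ i := by exact_mod_cast hi
  have h₁ : 2 * (i : ℝ) + 1 ≠ 0 := by linarith
  have h₂ : 2 * (i : ℝ) - 1 ≠ 0 := by linarith
  unfold oddRatio
  rw [inv_div]; push_cast
  rw [show 2 * ((i : ℝ) + 1) - 1 = 2 * i + 1 by ring]
  field_simp
  ring

theorem lSet_two_four_iff {x : ℝ} : LSet 2 4 x ↔ ∃ i, 0 < i ∧ x = oddRatio i := by
  constructor
  · refine LSet.two_induction (P := fun x => ∃ i, 0 < i ∧ x = oddRatio i)
      ⟨1, one_pos, by norm_num [oddRatio_one]⟩ ?_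
    rintro _ - ⟨i, hi, rfl⟩
    refine ⟨i + 1, i.succ_pos, ?_⟩
    rw [← two_sub_inv_oddRatio hi]; ring
  · rintro ⟨i, hi, rfl⟩
    induction i, hi using Nat.le_induction with
    | base => rw [oddRatio_one, show (3 : ℝ) = 4 - 1 by norm_num]; exact LSet.base
    | succ i hi ih =>
      have hmap : (4 : ℝ) - 2 - (oddRatio i)⁻¹ = oddRatio (i + 1) := by
        rw [← two_sub_inv_oddRatio hi]; ring
      rw [← hmap]
      exact ih.two_step (hmap ▸ oddRatio_succ_pos i)

theorem stmt_9 :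
    {x : ℝ | LSet 2 4 x} =
      {x : ℝ | ∃ i : ℕ, 0 < i ∧ x = (2 * (i : ℝ) + 1) / (2 * (i : ℝ) - 1)} :=
  Set.ext fun _ => lSet_two_four_iff
end

section
/- Let n and t be positive integers with t ≥ 2, t dividing n and t² ≤ n. Then (n − t + 1)/t ∈ ℒ_{n−t+1}(n+1), and moreover (n − t + 1) · (t/(n − t + 1)) = (n+1) − (n − t + 1). -/
open Finset

/-! With `n = t m`, apply the rule once with `s = n - m` copies of the base element `α - 1 = n`:
this gives `n - s - s / n = m - 1 + 1 / t = (n - t + 1) / t`. -/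

theorem LSet.step_base_repeat {r s : ℕ} {α : ℝ} (hs1 : 1 ≤ s) (hsr : s ≤ r - 1)
    (hpos : 0 < α - 1 - s - s / (α - 1)) : LSet r α (α - 1 - s - s / (α - 1)) := by
  have hsum : ∑ _i : Fin s, (α - 1)⁻¹ = s / (α - 1) := by
    simp [div_eq_mul_inv]
  rw [← hsum] at hpos ⊢
  exact LSet.step s hs1 hsr (fun _ => α - 1) (fun _ => LSet.base) hpos

theorem div_eq_mul_sub_sub_div {K : Type*} [Field K] {t m : K} (ht : t ≠ 0) (hm : m ≠ 0) :
    (t * m - t + 1) / t = t * m - (t * m - m) - (t * m - m) / (t * m) := by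
  field_simp
  ring

theorem stmt_13 (n t : ℕ) (ht : 2 ≤ t) (hdvd : t ∣ n) (ht2 : t ^ 2 ≤ n) :
    LSet (n - t + 1) ((n : ℝ) + 1) (((n : ℝ) - (t : ℝ) + 1) / (t : ℝ)) ∧
      ((n : ℝ) - (t : ℝ) + 1) * ((t : ℝ) / ((n : ℝ) - (t : ℝ) + 1)) =
        ((n : ℝ) + 1) - ((n : ℝ) - (t : ℝ) + 1) := by
  obtain ⟨m, rfl⟩ := hdvd
  have htm : t ≤ m := Nat.le_of_mul_le_mul_left (pow_two t ▸ ht2) (by omega)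
  have hm_lt : m < t * m := by nlinarith
  have hs_cast : ((t * m - m : ℕ) : ℝ) = t * m - m := by
    rw [Nat.cast_sub hm_lt.le, Nat.cast_mul]
  have hvalue : ((t * m : ℕ) - (t : ℝ) + 1) / t =
      ((t * m : ℕ) + 1 : ℝ) - 1 - ((t * m - m : ℕ) : ℝ) - ((t * m - m : ℕ) : ℝ) /
        (((t * m : ℕ) + 1 : ℝ) - 1) := by
    rw [hs_cast, add_sub_cancel_right, Nat.cast_mul]
    exact div_eq_mul_sub_sub_div (Nat.cast_ne_zero.mpr (by omega))
      (Nat.cast_ne_zero.mpr (by omega))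
  have hnum : 0 < ((t * m : ℕ) : ℝ) - t + 1 := by
    have : (t : ℝ) ≤ (t * m : ℕ) := by exact_mod_cast htm.trans hm_lt.le
    linarith
  constructor
  · rw [hvalue]
    refine LSet.step_base_repeat (by omega) (by omega) ?_
    rw [← hvalue]
    exact div_pos hnum (Nat.cast_pos.mpr (by omega))
  · rw [mul_div_cancel₀ _ hnum.ne']
    ring
end

section
/- For every positive integer k ≥ 1, the numbers 3(2k+1)/(6k+1) and (4k+1)/(2k+1) belong to ℒ_{6k}(6k+2), and (4k+1) · ((2k+1)/(4k+1)) = (6k+2) − (4k+1). -/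
open Finset

theorem stmt_15 (k : ℕ) (hk : 1 ≤ k) :
    LSet (6 * k) (6 * (k : ℝ) + 2) (3 * (2 * (k : ℝ) + 1) / (6 * (k : ℝ) + 1)) ∧
    LSet (6 * k) (6 * (k : ℝ) + 2) ((4 * (k : ℝ) + 1) / (2 * (k : ℝ) + 1)) ∧
      (4 * (k : ℝ) + 1) * ((2 * (k : ℝ) + 1) / (4 * (k : ℝ) + 1)) =
        (6 * (k : ℝ) + 2) - (4 * (k : ℝ) + 1) := by
  have hk1 : (1:ℝ) ≤ (k:ℝ) := by exact_mod_cast hk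
  have h61 : (0:ℝ) < 6*(k:ℝ)+1 := by linarith
  have h21 : (0:ℝ) < 2*(k:ℝ)+1 := by linarith
  have h41 : (0:ℝ) < 4*(k:ℝ)+1 := by linarith
  have hb : LSet (6*k) (6*(k:ℝ)+2) (6*(k:ℝ)+1) := by
    have h := LSet.base (r := 6*k) (α := 6*(k:ℝ)+2)
    convert h using 1; ring
  have hcast1 : ((6*k-1 : ℕ) : ℝ) = 6*(k:ℝ)-1 := by
    rw [Nat.cast_sub (by omega)]; push_cast; ring
  -- First membership
  have hE1 : (6*(k:ℝ)+2) - 1 - ((6*k-1 : ℕ) : ℝ)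
      - ∑ _i : Fin (6*k-1), ((fun _ : Fin (6*k-1) => 6*(k:ℝ)+1) _i)⁻¹
      = 3 * (2*(k:ℝ)+1) / (6*(k:ℝ)+1) := by
    rw [Finset.sum_const, Finset.card_univ, Fintype.card_fin, nsmul_eq_mul, hcast1]
    field_simp
    ring
  have hA : LSet (6*k) (6*(k:ℝ)+2) (3 * (2*(k:ℝ)+1) / (6*(k:ℝ)+1)) := by
    have hstep := LSet.step (r := 6*k) (α := 6*(k:ℝ)+2) (6*k-1) (by omega) (by omega)
      (fun _ => 6*(k:ℝ)+1) (fun _ => hb)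
      (by rw [hE1]; positivity)
    rwa [hE1] at hstep
  have hcast2 : ((3*k : ℕ) : ℝ) = 3*(k:ℝ) := by push_cast; ring
  have hE2 : (6*(k:ℝ)+2) - 1 - ((3*k : ℕ) : ℝ)
      - ∑ _i : Fin (3*k), ((fun _ : Fin (3*k) => 3 * (2*(k:ℝ)+1) / (6*(k:ℝ)+1)) _i)⁻¹
      = (4*(k:ℝ)+1) / (2*(k:ℝ)+1) := by
    rw [Finset.sum_const, Finset.card_univ, Fintype.card_fin, nsmul_eq_mul, hcast2]
    field_simp
    ring
  have hB : LSet (6*k) (6*(k:ℝ)+2) ((4*(k:ℝ)+1) / (2*(k:ℝ)+1)) := by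
    have hstep := LSet.step (r := 6*k) (α := 6*(k:ℝ)+2) (3*k) (by omega) (by omega)
      (fun _ => 3 * (2*(k:ℝ)+1) / (6*(k:ℝ)+1)) (fun _ => hA)
      (by rw [hE2]; positivity)
    rwa [hE2] at hstep
  exact ⟨hA, hB, by field_simp; ring⟩
end

section
/- For every integer k ≥ 0, the numbers (6k+7)/(6k+5), (12k+13)/(6k+5), (12k+11)/(12k+13) and (6k+7)/(12k+11) all belong to ℒ_{6k+4}(6k+6), and (2k+1) · ((12k+11)/(6k+7)) + 2 · ((6k+5)/(6k+7)) = (6k+6) − (2k+3). -/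
open Finset

lemma LSet.const_step (r : ℕ) (α : ℝ) (s : ℕ) (hs1 : 1 ≤ s) (hsr : s ≤ r - 1)
    (q : ℝ) (hq : LSet r α q) (hpos : 0 < α - 1 - (s : ℝ) - (s : ℝ) * q⁻¹) :
    LSet r α (α - 1 - (s : ℝ) - (s : ℝ) * q⁻¹) := by
  have hsum : ∑ _i : Fin s, q⁻¹ = (s : ℝ) * q⁻¹ := by
    simp [Finset.sum_const, nsmul_eq_mul]
  have h := LSet.step (r := r) (α := α) s hs1 hsr (fun _ => q) (fun _ => hq)
    (by rw [hsum]; exact hpos)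
  rwa [hsum] at h

theorem stmt_17 (k : ℕ) :
    LSet (6 * k + 4) (6 * (k : ℝ) + 6) ((6 * (k : ℝ) + 7) / (6 * (k : ℝ) + 5)) ∧
    LSet (6 * k + 4) (6 * (k : ℝ) + 6) ((12 * (k : ℝ) + 13) / (6 * (k : ℝ) + 5)) ∧
    LSet (6 * k + 4) (6 * (k : ℝ) + 6) ((12 * (k : ℝ) + 11) / (12 * (k : ℝ) + 13)) ∧
    LSet (6 * k + 4) (6 * (k : ℝ) + 6) ((6 * (k : ℝ) + 7) / (12 * (k : ℝ) + 11)) ∧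
      (2 * (k : ℝ) + 1) * ((12 * (k : ℝ) + 11) / (6 * (k : ℝ) + 7)) +
          2 * ((6 * (k : ℝ) + 5) / (6 * (k : ℝ) + 7)) =
        (6 * (k : ℝ) + 6) - (2 * (k : ℝ) + 3) := by
  set R := 6 * k + 4 with hR
  set A : ℝ := 6 * (k : ℝ) + 6 with hA
  have h5 : (6 * (k : ℝ) + 5) ≠ 0 := by positivity
  have h7 : (6 * (k : ℝ) + 7) ≠ 0 := by positivity
  have h13 : (12 * (k : ℝ) + 13) ≠ 0 := by positivity
  have h11 : (12 * (k : ℝ) + 11) ≠ 0 := by positivity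
  have hb : LSet R A (6 * (k : ℝ) + 5) := by
    have h := LSet.base (r := R) (α := A)
    convert h using 1; rw [hA]; ring
  -- item 1
  have h1 : LSet R A ((6 * (k : ℝ) + 7) / (6 * (k : ℝ) + 5)) := by
    have e : A - 1 - ((6 * k + 3 : ℕ) : ℝ) - ((6 * k + 3 : ℕ) : ℝ) * (6 * (k : ℝ) + 5)⁻¹
        = (6 * (k : ℝ) + 7) / (6 * (k : ℝ) + 5) := by
      rw [hA]; push_cast; field_simp; ring
    have h := LSet.const_step R A (6 * k + 3) (by omega) (by omega)
      (6 * (k : ℝ) + 5) hb (by rw [e]; positivity)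
    rwa [e] at h
  -- item 2
  have h2 : LSet R A ((12 * (k : ℝ) + 13) / (6 * (k : ℝ) + 5)) := by
    have e : A - 1 - ((6 * k + 2 : ℕ) : ℝ) - ((6 * k + 2 : ℕ) : ℝ) * (6 * (k : ℝ) + 5)⁻¹
        = (12 * (k : ℝ) + 13) / (6 * (k : ℝ) + 5) := by
      rw [hA]; push_cast; field_simp; ring
    have h := LSet.const_step R A (6 * k + 2) (by omega) (by omega)
      (6 * (k : ℝ) + 5) hb (by rw [e]; positivity)
    rwa [e] at h
  -- item 3
  have h3 : LSet R A ((12 * (k : ℝ) + 11) / (12 * (k : ℝ) + 13)) := by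
    have e : A - 1 - ((4 * k + 3 : ℕ) : ℝ) -
        ((4 * k + 3 : ℕ) : ℝ) * ((12 * (k : ℝ) + 13) / (6 * (k : ℝ) + 5))⁻¹
        = (12 * (k : ℝ) + 11) / (12 * (k : ℝ) + 13) := by
      rw [hA]; push_cast; rw [inv_div]; field_simp; ring
    have h := LSet.const_step R A (4 * k + 3) (by omega) (by omega)
      ((12 * (k : ℝ) + 13) / (6 * (k : ℝ) + 5)) h2 (by rw [e]; positivity)
    rwa [e] at h
  -- item 4
  have h4 : LSet R A ((6 * (k : ℝ) + 7) / (12 * (k : ℝ) + 11)) := by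
    have e : A - 1 - ((3 * k + 2 : ℕ) : ℝ) -
        ((3 * k + 2 : ℕ) : ℝ) * ((12 * (k : ℝ) + 11) / (12 * (k : ℝ) + 13))⁻¹
        = (6 * (k : ℝ) + 7) / (12 * (k : ℝ) + 11) := by
      rw [hA]; push_cast; rw [inv_div]; field_simp; ring
    have h := LSet.const_step R A (3 * k + 2) (by omega) (by omega)
      ((12 * (k : ℝ) + 11) / (12 * (k : ℝ) + 13)) h3 (by rw [e]; positivity)
    rwa [e] at h
  refine ⟨h1, h2, h3, h4, ?_⟩
  field_simp
  ring
end
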